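/- (Lemma 2) For any a, b ∈ 𝔓^{n−1}M with da = −ξ_a⌟Ω and db = −ξ_b⌟Ω, the internal 𝔭-bracket {a,b} := ξ_b⌟ξ_a⌟Ω satisfies d{a,b} = −[ξ_a, ξ_b]⌟Ω, where [ξ_a, ξ_b] is the Lie bracket of vector fields. In particular {a,b} ∈ 𝔓^{n−1}M. -/

import Mathlib

open scoped BigOperators
open MeasureTheory

noncomputable section

namespace Pataplectic

/-- A multi-index `μ : Fin d → Fin e` is increasing. -/
def IncP {d e : ℕ} (μ : Fin d → Fin e) : Prop := ∀ a b : Fin d, a < b → μ a < μ b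

instance {d e : ℕ} : DecidablePred (@IncP d e) := fun μ => by unfold IncP; infer_instance

variable (n k : ℕ)

/-- Coordinates on `X × Y`, where `X = ℝⁿ` and `Y = ℝᵏ`. -/
abbrev E := Fin (n + k) → ℝ

/-- Increasing multi-indices of length `n`, indexing the coordinates
`p_{μ₁…μₙ}` of a point of `ΛⁿT*(X×Y)` over a point of `X×Y`. -/
abbrev Idx := {μ : Fin n → Fin (n + k) // IncP μ}

/-- The fiber of `ΛⁿT*(X×Y)`, described by its coordinates `p_{μ₁…μₙ}`. -/
abbrev Psp := Idx n k → ℝ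

/-- The pataplectic manifold `M = ΛⁿT*(X×Y)`. -/
abbrev Mfd := E n k × Psp n k

/-- Evaluation `⟨p, z₁ ∧ … ∧ zₙ⟩` of `p ∈ ΛⁿT*_q(X×Y)` on an `n`-tuple of
tangent vectors: `Σ_{μ₁<…<μₙ} p_{μ₁…μₙ} det (z_b^{μ_a})`. -/
def pApply (p : Psp n k) (z : Fin n → E n k) : ℝ :=
  ∑ μ : Idx n k, p μ * Matrix.det (Matrix.of fun a b => z b (μ.1 a))

/-- A (raw) differential `d`-form on `M`, given by its evaluation on `d`-tuples
of tangent vectors. -/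
abbrev Form (d : ℕ) := Mfd n k → (Fin d → Mfd n k) → ℝ

variable {n k}

/-- The exterior derivative of a `d`-form on `M`, via the standard formula
on constant vector fields. -/
def extD {d : ℕ} (ω : Form n k d) : Form n k (d + 1) :=
  fun x v => ∑ i : Fin (d + 1),
    (-1 : ℝ) ^ (i : ℕ) * fderiv ℝ (fun y => ω y (i.removeNth v)) x (v i)

/-- Interior product of a vector field with a `(d+1)`-form. -/
def iota {d : ℕ} (ξ : Mfd n k → Mfd n k) (ω : Form n k (d + 1)) : Form n k d :=
  fun x v => ω x (Fin.cons (ξ x) v)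

/-- A raw form is smooth if its evaluation on any fixed tuple of (constant)
tangent vectors is a smooth function on `M`. -/
def SmoothF {d : ℕ} (ω : Form n k d) : Prop := ∀ v, ContDiff ℝ (⊤ : ℕ∞) (fun x => ω x v)

variable (n k)

/-- The Poincaré–Cartan form `θ = Σ_{μ₁<…<μₙ} p_{μ₁…μₙ} dq^{μ₁}∧…∧dq^{μₙ}`. -/
def theta : Form n k n := fun m v => pApply n k m.2 (fun i => (v i).1)

/-- The pataplectic form `Ω = dθ`. -/
def Omega : Form n k (n + 1) := extD (theta n k)

/-- The volume form `ω = dx¹∧…∧dxⁿ`, pulled back to `M`. -/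
def vol : Form n k n := fun _ v => Matrix.det (Matrix.of fun a b => (v b).1 (Fin.castAdd k a))

/-- Lie bracket of two vector fields on `M`. -/
def lieB {n k : ℕ} (ξ η : Mfd n k → Mfd n k) : Mfd n k → Mfd n k :=
  fun x => fderiv ℝ η x (ξ x) - fderiv ℝ ξ x (η x)


section Aux

variable {n k : ℕ}

/-! ### Linearity of `pApply` in the `p` variable -/

lemma pApply_add_left (p q : Psp n k) (z : Fin n → E n k) :
    pApply n k (p + q) z = pApply n k p z + pApply n k q z := by
  unfold pApply
  rw [← Finset.sum_add_distrib]
  exact Finset.sum_congr rfl fun μ _ => by simp [add_mul]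

lemma pApply_smul_left (c : ℝ) (p : Psp n k) (z : Fin n → E n k) :
    pApply n k (c • p) z = c * pApply n k p z := by
  unfold pApply
  rw [Finset.mul_sum]
  exact Finset.sum_congr rfl fun μ _ => by simp [mul_assoc]

/-! ### Multilinearity of `pApply` in the `z` slots -/

private lemma pApply_matrix_update (z : Fin n → E n k) (b : Fin n) (u : E n k) (μ : Idx n k) :
    (Matrix.of fun a b' => Function.update z b u b' (μ.1 a)) =
      Matrix.updateCol (Matrix.of fun a b' => z b' (μ.1 a)) b fun a => u (μ.1 a) := by
  ext a b'
  by_cases hb : b' = b <;> simp [Matrix.updateCol_apply, Function.update_apply, hb]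

lemma pApply_update_add (p : Psp n k) (z : Fin n → E n k) (b : Fin n) (u v : E n k) :
    pApply n k p (Function.update z b (u + v)) =
      pApply n k p (Function.update z b u) + pApply n k p (Function.update z b v) := by
  unfold pApply
  rw [← Finset.sum_add_distrib]
  refine Finset.sum_congr rfl fun μ _ => ?_
  rw [pApply_matrix_update, pApply_matrix_update, pApply_matrix_update]
  have : (fun a => (u + v) (μ.1 a)) = (fun a => u (μ.1 a)) + fun a => v (μ.1 a) := rfl
  rw [this, Matrix.det_updateCol_add, mul_add]

lemma pApply_update_smul (p : Psp n k) (z : Fin n → E n k) (b : Fin n) (c : ℝ) (u : E n k) :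
    pApply n k p (Function.update z b (c • u)) = c * pApply n k p (Function.update z b u) := by
  unfold pApply
  rw [Finset.mul_sum]
  refine Finset.sum_congr rfl fun μ _ => ?_
  rw [pApply_matrix_update, pApply_matrix_update]
  have : (fun a => (c • u) (μ.1 a)) = c • fun a => u (μ.1 a) := rfl
  rw [this, Matrix.det_updateCol_smul]
  ring

lemma pApply_eq_zero_of_eq (p : Psp n k) (z : Fin n → E n k) {b b' : Fin n}
    (hbb : b ≠ b') (hz : z b = z b') : pApply n k p z = 0 := by
  unfold pApply
  refine Finset.sum_eq_zero fun μ _ => ?_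
  rw [Matrix.det_zero_of_column_eq hbb (fun a => by simp [hz]), mul_zero]

/-! ### `Fin` tuple helpers -/

lemma succAbove_val {m : ℕ} (i : Fin (m + 1)) (j : Fin m) :
    ((i.succAbove j : Fin (m + 1)) : ℕ) = if (j : ℕ) < (i : ℕ) then (j : ℕ) else (j : ℕ) + 1 := by
  unfold Fin.succAbove
  split_ifs with h h' h' <;> simp_all [Fin.lt_def]

lemma removeNth_succ_cons {m : ℕ} {α : Type*} (j : Fin (m + 1)) (u : α) (w : Fin (m + 1) → α) :
    (Fin.succ j).removeNth (α := fun _ => α) (Fin.cons u w)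
      = (Fin.cons u (j.removeNth (α := fun _ => α) w) : Fin (m + 1) → α) := by
  funext t
  simp only [Fin.removeNth]
  refine Fin.cases ?_ (fun s => ?_) t
  · rw [Fin.succ_succAbove_zero, Fin.cons_zero, Fin.cons_zero]
  · rw [Fin.succ_succAbove_succ, Fin.cons_succ, Fin.cons_succ]; rfl

lemma removeNth_update_same {m : ℕ} {α : Type*} (c : Fin (m + 1)) (w : Fin (m + 1) → α) (x : α) :
    c.removeNth (Function.update w c x) = c.removeNth w := by
  funext t
  simp [Fin.removeNth, Function.update_apply, Fin.succAbove_ne c t]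

lemma removeNth_update_succAbove {m : ℕ} {α : Type*} (j : Fin (m + 1)) (b : Fin m)
    (w : Fin (m + 1) → α) (x : α) :
    j.removeNth (Function.update w (j.succAbove b) x) = Function.update (j.removeNth w) b x := by
  funext t
  simp [Fin.removeNth, Function.update_apply, Fin.succAbove_right_inj]

lemma update_cons_one {m : ℕ} {α : Type*} (s t x : α) (w : Fin m → α) :
    Function.update (Fin.cons s (Fin.cons t w)) ((0 : Fin (m + 1)).succ) x
      = (Fin.cons s (Fin.cons x w) : Fin (m + 2) → α) := by
  rw [← Fin.cons_update, Fin.update_cons_zero]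

/-! ### The form `Om`, the value of `Ω = dθ` (which is independent of the base point) -/

/-- The pataplectic form `Ω`, as a function of the `n+1` tangent vectors only. -/
def Om (n k : ℕ) (w : Fin (n + 1) → Mfd n k) : ℝ :=
  ∑ j : Fin (n + 1), (-1 : ℝ) ^ (j : ℕ) * pApply n k ((w j).2) fun t => (j.removeNth w t).1

/-- `θ y u`, as a continuous linear function of `y`. -/
def thetaCLM (n k : ℕ) (z : Fin n → E n k) : Mfd n k →L[ℝ] ℝ :=
  LinearMap.toContinuousLinearMap
    { toFun := fun y => pApply n k y.2 z
      map_add' := fun y y' => pApply_add_left y.2 y'.2 z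
      map_smul' := fun c y => by
        simp only [RingHom.id_apply, smul_eq_mul]
        exact pApply_smul_left c y.2 z }

@[simp] lemma thetaCLM_apply (z : Fin n → E n k) (y : Mfd n k) :
    thetaCLM n k z y = pApply n k y.2 z := rfl

lemma Omega_eq (x : Mfd n k) (w : Fin (n + 1) → Mfd n k) :
    Omega n k x w = Om n k w := by
  unfold Omega Om extD
  refine Finset.sum_congr rfl fun j _ => ?_
  congr 1
  have h : (fun y => theta n k y (j.removeNth w))
      = ⇑(thetaCLM n k fun t => ((j.removeNth w) t).1) := by
    funext y; rfl
  rw [h, ContinuousLinearMap.fderiv]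
  rfl

/-! ### Multilinearity and antisymmetry of `Om` -/

private lemma sum_univ_two_plus {m : ℕ} (g : Fin (m + 2) → ℝ) :
    ∑ j, g j = g 0 + g ((0 : Fin (m + 1)).succ) + ∑ j : Fin m, g (j.succ.succ) := by
  rw [Fin.sum_univ_succ, Fin.sum_univ_succ]; ring

private lemma fst_update (r : Fin n → Mfd n k) (b : Fin n) (x : Mfd n k) :
    (fun t => ((Function.update r b x) t).1) = Function.update (fun t => (r t).1) b x.1 := by
  funext t
  by_cases ht : t = b <;> simp [Function.update_apply, ht]

lemma Om_update_add (w : Fin (n + 1) → Mfd n k) (c : Fin (n + 1)) (u v : Mfd n k) :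
    Om n k (Function.update w c (u + v))
      = Om n k (Function.update w c u) + Om n k (Function.update w c v) := by
  unfold Om
  rw [← Finset.sum_add_distrib]
  refine Finset.sum_congr rfl fun j _ => ?_
  by_cases hj : j = c
  · subst hj
    rw [removeNth_update_same, removeNth_update_same, removeNth_update_same]
    simp only [Function.update_self]
    rw [show (u + v).2 = u.2 + v.2 from rfl, pApply_add_left]
    ring
  · obtain ⟨b, hb⟩ := Fin.exists_succAbove_eq (Ne.symm hj)
    rw [← hb, removeNth_update_succAbove, removeNth_update_succAbove, removeNth_update_succAbove,
      fst_update, fst_update, fst_update, hb]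
    rw [Function.update_of_ne hj, Function.update_of_ne hj, Function.update_of_ne hj,
      show (u + v).1 = u.1 + v.1 from rfl, pApply_update_add]
    ring

lemma Om_update_smul (w : Fin (n + 1) → Mfd n k) (c : Fin (n + 1)) (r : ℝ) (u : Mfd n k) :
    Om n k (Function.update w c (r • u)) = r * Om n k (Function.update w c u) := by
  unfold Om
  rw [Finset.mul_sum]
  refine Finset.sum_congr rfl fun j _ => ?_
  by_cases hj : j = c
  · subst hj
    rw [removeNth_update_same, removeNth_update_same]
    simp only [Function.update_self]
    rw [show (r • u).2 = r • u.2 from rfl, pApply_smul_left]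
    ring
  · obtain ⟨b, hb⟩ := Fin.exists_succAbove_eq (Ne.symm hj)
    rw [← hb, removeNth_update_succAbove, removeNth_update_succAbove,
      fst_update, fst_update, hb]
    rw [Function.update_of_ne hj, Function.update_of_ne hj,
      show (r • u).1 = r • u.1 from rfl, pApply_update_smul]
    ring

lemma Om_cons_add (u v : Mfd n k) (w : Fin n → Mfd n k) :
    Om n k (Fin.cons (u + v) w) = Om n k (Fin.cons u w) + Om n k (Fin.cons v w) := by
  have h := Om_update_add (Fin.cons u w) 0 u v
  rwa [Fin.update_cons_zero, Fin.update_cons_zero, Fin.update_cons_zero] at h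

lemma Om_cons_smul (r : ℝ) (u : Mfd n k) (w : Fin n → Mfd n k) :
    Om n k (Fin.cons (r • u) w) = r * Om n k (Fin.cons u w) := by
  have h := Om_update_smul (Fin.cons u w) 0 r u
  rwa [Fin.update_cons_zero, Fin.update_cons_zero] at h

lemma Om_cons_cons_add (s u v : Mfd (n + 1) k) (w : Fin n → Mfd (n + 1) k) :
    Om (n + 1) k (Fin.cons s (Fin.cons (u + v) w))
      = Om (n + 1) k (Fin.cons s (Fin.cons u w)) + Om (n + 1) k (Fin.cons s (Fin.cons v w)) := by
  have h := Om_update_add (Fin.cons s (Fin.cons u w)) ((0 : Fin (n + 1)).succ) u v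
  rwa [update_cons_one, update_cons_one, update_cons_one] at h

lemma Om_cons_cons_smul (r : ℝ) (s u : Mfd (n + 1) k) (w : Fin n → Mfd (n + 1) k) :
    Om (n + 1) k (Fin.cons s (Fin.cons (r • u) w))
      = r * Om (n + 1) k (Fin.cons s (Fin.cons u w)) := by
  have h := Om_update_smul (Fin.cons s (Fin.cons u w)) ((0 : Fin (n + 1)).succ) r u
  rwa [update_cons_one, update_cons_one] at h

lemma Om_diag (s : Mfd (n + 1) k) (w : Fin n → Mfd (n + 1) k) :
    Om (n + 1) k (Fin.cons s (Fin.cons s w)) = 0 := by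
  have h0 : (0 : Fin (n + 2)).removeNth (α := fun _ => Mfd (n + 1) k)
      (Fin.cons s (Fin.cons s w)) = Fin.cons s w := by
    rw [Fin.removeNth_zero, Fin.tail_cons]
  have h1 : ((0 : Fin (n + 1)).succ).removeNth (α := fun _ => Mfd (n + 1) k)
      (Fin.cons s (Fin.cons s w)) = Fin.cons s w := by
    rw [removeNth_succ_cons, Fin.removeNth_zero, Fin.tail_cons]
  have hz : ∀ j : Fin n,
      pApply (n + 1) k ((w j).2)
        (fun t => (((j.succ.succ) : Fin (n + 2)).removeNth (α := fun _ => Mfd (n + 1) k)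
          (Fin.cons s (Fin.cons s w)) t).1)
        = 0 := by
    intro j
    haveI : NeZero n := ⟨Nat.pos_iff_ne_zero.mp j.pos⟩
    refine pApply_eq_zero_of_eq _ _ (b := (0 : Fin (n + 1))) (b' := (0 : Fin n).succ)
      (Ne.symm (Fin.succ_ne_zero _)) ?_
    simp only [Fin.removeNth, Fin.succ_succAbove_zero, Fin.succ_succAbove_succ,
      Fin.cons_zero, Fin.cons_succ]
  unfold Om
  rw [sum_univ_two_plus]
  simp only [h0, h1, Fin.cons_zero, Fin.cons_succ, hz, Fin.val_zero, Fin.val_succ,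
    pow_zero, pow_one, mul_zero, Finset.sum_const_zero]
  ring

lemma Om_swap01 (u t : Mfd (n + 1) k) (w : Fin n → Mfd (n + 1) k) :
    Om (n + 1) k (Fin.cons u (Fin.cons t w)) = - Om (n + 1) k (Fin.cons t (Fin.cons u w)) := by
  have h := Om_diag (n := n) (k := k) (u + t) w
  rw [Om_cons_add, Om_cons_cons_add, Om_cons_cons_add, Om_diag, Om_diag] at h
  linarith

/-! ### `Om` with varying vectors in the first slots, as continuous (bi)linear maps -/

/-- `Om` with a varying vector in slot 0, as a continuous linear map. -/
def OmCLM0 (u : Fin n → Mfd n k) : Mfd n k →L[ℝ] ℝ :=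
  LinearMap.toContinuousLinearMap
    { toFun := fun s => Om n k (Fin.cons s u)
      map_add' := fun s s' => Om_cons_add s s' u
      map_smul' := fun c s => by
        simp only [RingHom.id_apply, smul_eq_mul]; exact Om_cons_smul c s u }

@[simp] lemma OmCLM0_apply (u : Fin n → Mfd n k) (s : Mfd n k) :
    OmCLM0 u s = Om n k (Fin.cons s u) := rfl

/-- `Om` with varying vectors in slots 0 and 1, as a continuous bilinear map. -/
def OmCLM2 (u : Fin n → Mfd (n + 1) k) : Mfd (n + 1) k →L[ℝ] Mfd (n + 1) k →L[ℝ] ℝ :=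
  LinearMap.toContinuousLinearMap
    { toFun := fun s => LinearMap.toContinuousLinearMap
        { toFun := fun t' => Om (n + 1) k (Fin.cons s (Fin.cons t' u))
          map_add' := fun x y => Om_cons_cons_add s x y u
          map_smul' := fun c x => by
            simp only [RingHom.id_apply, smul_eq_mul]; exact Om_cons_cons_smul c s x u }
      map_add' := fun s s' => ContinuousLinearMap.ext fun t' => by
        simp only [ContinuousLinearMap.add_apply, LinearMap.coe_toContinuousLinearMap',
          LinearMap.coe_mk, AddHom.coe_mk]
        exact Om_cons_add s s' (Fin.cons t' u)
      map_smul' := fun c s => ContinuousLinearMap.ext fun t' => by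
        simp only [ContinuousLinearMap.coe_smul', Pi.smul_apply, RingHom.id_apply,
          LinearMap.coe_toContinuousLinearMap', LinearMap.coe_mk, AddHom.coe_mk, smul_eq_mul]
        exact Om_cons_smul c s (Fin.cons t' u) }

@[simp] lemma OmCLM2_apply (u : Fin n → Mfd (n + 1) k) (s t' : Mfd (n + 1) k) :
    OmCLM2 u s t' = Om (n + 1) k (Fin.cons s (Fin.cons t' u)) := rfl

/-! ### `d ∘ d = 0` -/

private def invol {d : ℕ} (p : Fin (d + 2) × Fin (d + 1)) : Fin (d + 2) × Fin (d + 1) :=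
  if h : (p.2 : ℕ) < (p.1 : ℕ) then
    (⟨(p.2 : ℕ), Nat.lt_succ_of_lt p.2.isLt⟩, ⟨(p.1 : ℕ) - 1, by have := p.1.isLt; omega⟩)
  else
    (⟨(p.2 : ℕ) + 1, by have := p.2.isLt; omega⟩, ⟨(p.1 : ℕ), by have := p.2.isLt; omega⟩)

private lemma invol_eval {d : ℕ} (p : Fin (d + 2) × Fin (d + 1)) :
    ((invol p).1 : ℕ) = (if (p.2 : ℕ) < (p.1 : ℕ) then (p.2 : ℕ) else (p.2 : ℕ) + 1) ∧
    ((invol p).2 : ℕ) = (if (p.2 : ℕ) < (p.1 : ℕ) then (p.1 : ℕ) - 1 else (p.1 : ℕ)) := by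
  simp only [invol]
  split_ifs with h <;> exact ⟨rfl, rfl⟩

private lemma invol_spec {d : ℕ} {M : Type*} (w : Fin (d + 2) → M)
    (p : Fin (d + 2) × Fin (d + 1)) :
    w ((invol p).1) = w (p.1.succAbove p.2) ∧
    w ((invol p).1.succAbove (invol p).2) = w p.1 ∧
    ((invol p).2.removeNth ((invol p).1.removeNth w)) = p.2.removeNth (p.1.removeNth w) ∧
    (((invol p).1 : ℕ) + ((invol p).2 : ℕ) + 1 = (p.1 : ℕ) + (p.2 : ℕ) ∨
      (p.1 : ℕ) + (p.2 : ℕ) + 1 = ((invol p).1 : ℕ) + ((invol p).2 : ℕ)) := by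
  have hi := p.1.isLt
  have hj := p.2.isLt
  obtain ⟨hA, hB⟩ := invol_eval p
  refine ⟨congrArg w (Fin.ext ?_), congrArg w (Fin.ext ?_), ?_, ?_⟩
  · rw [hA, succAbove_val]
    all_goals split_ifs <;> omega
  · rw [succAbove_val, hA, hB]
    all_goals split_ifs <;> omega
  · funext t
    simp only [Fin.removeNth]
    refine congrArg w (Fin.ext ?_)
    simp only [succAbove_val, hA, hB]
    all_goals split_ifs <;> omega
  · rw [hA, hB]
    all_goals split_ifs <;> omega

private lemma invol_ne {d : ℕ} (p : Fin (d + 2) × Fin (d + 1)) : invol p ≠ p := by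
  intro heq
  have hval : ((invol p).1 : ℕ) = (p.1 : ℕ) := by rw [heq]
  rw [(invol_eval p).1] at hval
  have hj := p.2.isLt
  split_ifs at hval <;> omega

private lemma invol_invol {d : ℕ} (p : Fin (d + 2) × Fin (d + 1)) : invol (invol p) = p := by
  have hi := p.1.isLt
  have hj := p.2.isLt
  obtain ⟨hA, hB⟩ := invol_eval p
  obtain ⟨hA', hB'⟩ := invol_eval (invol p)
  refine Prod.ext (Fin.ext ?_) (Fin.ext ?_)
  · rw [hA', hA, hB]
    split_ifs <;> omega
  · rw [hB', hA, hB]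
    split_ifs <;> omega

private lemma sum_cancel {d : ℕ} {M : Type*} (w : Fin (d + 2) → M)
    (S : (Fin d → M) → M → M → ℝ) (hS : ∀ r p q, S r p q = S r q p) :
    ∑ i : Fin (d + 2), ∑ j : Fin (d + 1),
      (-1 : ℝ) ^ (i : ℕ) * ((-1 : ℝ) ^ (j : ℕ) *
        S (j.removeNth (i.removeNth w)) (w i) (w (i.succAbove j))) = 0 := by
  have key : ∀ A B : ℕ, A + 1 = B ∨ B + 1 = A → ∀ X : ℝ,
      (-1 : ℝ) ^ A * X + (-1 : ℝ) ^ B * X = 0 := by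
    rintro A B (h | h) X <;> rw [← h, pow_succ] <;> ring
  rw [← Finset.sum_product', Finset.univ_product_univ]
  refine Finset.sum_ninvolution invol ?_ (fun p _ => invol_ne p)
    (fun p => Finset.mem_univ _) invol_invol
  intro p
  obtain ⟨e1, e2, e3, e4⟩ := invol_spec w p
  rw [e1, e2, e3, hS (p.2.removeNth (p.1.removeNth w)) (w (p.1.succAbove p.2)) (w p.1)]
  rw [← mul_assoc, ← pow_add, ← mul_assoc, ← pow_add]
  rw [add_comm ((-1:ℝ) ^ ((p.1 : ℕ) + (p.2 : ℕ)) * _)]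
  exact key _ _ (by omega) _

/-- The square of the exterior differential of a smooth raw form vanishes. -/
lemma extD_extD {d' : ℕ} (a : Form n k d') (ha : SmoothF a) (x : Mfd n k)
    (w : Fin (d' + 2) → Mfd n k) : extD (extD a) x w = 0 := by
  have hd1 : ∀ u : Fin d' → Mfd n k, Differentiable ℝ (fderiv ℝ fun z => a z u) :=
    fun u => ((ha u).fderiv_right (m := 1) (WithTop.coe_le_coe.mpr le_top)).differentiable one_ne_zero
  have hS : ∀ (r : Fin d' → Mfd n k) (p q : Mfd n k),
      fderiv ℝ (fderiv ℝ fun z => a z r) x p q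
        = fderiv ℝ (fderiv ℝ fun z => a z r) x q p := by
    intro r p q
    exact second_derivative_symmetric
      (fun y => (((ha r).differentiable (by simp)) y).hasFDerivAt) ((hd1 r x).hasFDerivAt) p q
  have hkey : ∀ i : Fin (d' + 2),
      fderiv ℝ (fun y => extD a y (i.removeNth w)) x (w i)
        = ∑ j : Fin (d' + 1), (-1 : ℝ) ^ (j : ℕ) *
            fderiv ℝ (fderiv ℝ fun z => a z (j.removeNth (i.removeNth w))) x (w i)
              ((i.removeNth w) j) := by
    intro i
    rw [show (fun y => extD a y (i.removeNth w))
        = fun y => ∑ j : Fin (d' + 1), (-1 : ℝ) ^ (j : ℕ) *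
            fderiv ℝ (fun z => a z (j.removeNth (i.removeNth w))) y ((i.removeNth w) j)
          from rfl]
    rw [fderiv_fun_sum fun j _ =>
      (((hd1 _) x).clm_apply (differentiableAt_const _)).const_mul _]
    rw [ContinuousLinearMap.sum_apply]
    refine Finset.sum_congr rfl fun j _ => ?_
    rw [fderiv_const_mul (((hd1 _) x).clm_apply (differentiableAt_const _))]
    rw [ContinuousLinearMap.smul_apply, smul_eq_mul]
    congr 1
    rw [fderiv_clm_apply ((hd1 _) x) (differentiableAt_const _)]
    simp
  calc extD (extD a) x w
      = ∑ i : Fin (d' + 2), (-1 : ℝ) ^ (i : ℕ) *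
          fderiv ℝ (fun y => extD a y (i.removeNth w)) x (w i) := rfl
    _ = ∑ i : Fin (d' + 2), ∑ j : Fin (d' + 1),
          (-1 : ℝ) ^ (i : ℕ) * ((-1 : ℝ) ^ (j : ℕ) *
            fderiv ℝ (fderiv ℝ fun z => a z (j.removeNth (i.removeNth w))) x (w i)
              (w (i.succAbove j))) := by
        refine Finset.sum_congr rfl fun i _ => ?_
        rw [hkey i, Finset.mul_sum]
        exact Finset.sum_congr rfl fun j _ => rfl
    _ = 0 := sum_cancel w
        (fun r p q => fderiv ℝ (fderiv ℝ fun z => a z r) x p q) hS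

/-- Peeling off the first term of the sums appearing in `hgen` below. -/
private lemma hgen_cons {n k : ℕ} (F : Mfd (n + 1) k → Mfd (n + 1) k) (s : Mfd (n + 1) k)
    (v : Fin (n + 1) → Mfd (n + 1) k) :
    ∑ j : Fin (n + 2), (-1 : ℝ) ^ (j : ℕ) *
        Om (n + 1) k (Fin.cons (F ((Fin.cons s v : Fin (n + 2) → Mfd (n + 1) k) j))
          (j.removeNth (α := fun _ => Mfd (n + 1) k) (Fin.cons s v)))
      = Om (n + 1) k (Fin.cons (F s) v)
        - ∑ i : Fin (n + 1), (-1 : ℝ) ^ (i : ℕ) *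
            Om (n + 1) k (Fin.cons (F (v i)) (Fin.cons s (i.removeNth v))) := by
  rw [Fin.sum_univ_succ]
  have hrem0 : (0 : Fin (n + 2)).removeNth (α := fun _ => Mfd (n + 1) k) (Fin.cons s v) = v := by
    rw [Fin.removeNth_zero, Fin.tail_cons]
  simp only [hrem0, Fin.cons_zero, Fin.val_zero, pow_zero, one_mul]
  rw [sub_eq_add_neg, ← Finset.sum_neg_distrib]
  congr 1
  refine Finset.sum_congr rfl fun j _ => ?_
  rw [removeNth_succ_cons, Fin.cons_succ, Fin.val_succ, pow_succ]
  ring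

end Aux

/-- (Lemma 2.) For `a, b ∈ 𝔓^{n-1}M` with `da = −ξ_a ⌟ Ω` and `db = −ξ_b ⌟ Ω`, the
internal 𝔭-bracket `{a,b} := ξ_b ⌟ ξ_a ⌟ Ω` satisfies `d{a,b} = −[ξ_a, ξ_b] ⌟ Ω`;
in particular `{a,b} ∈ 𝔓^{n-1}M`.
(Here the dimension of `X` is `n + 1`, so that `(n-1)`-forms on `M` have degree `n`.) -/
theorem pBracket_differential
    (n k : ℕ)
    (a b : Form (n + 1) k n) (ha : SmoothF a) (hb : SmoothF b)
    (ξa ξb : Mfd (n + 1) k → Mfd (n + 1) k)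
    (hξa : ContDiff ℝ (⊤ : ℕ∞) ξa) (hξb : ContDiff ℝ (⊤ : ℕ∞) ξb)
    (hda : ∀ (x : Mfd (n + 1) k) (v : Fin (n + 1) → Mfd (n + 1) k),
      extD a x v = - iota ξa (Omega (n + 1) k) x v)
    (hdb : ∀ (x : Mfd (n + 1) k) (v : Fin (n + 1) → Mfd (n + 1) k),
      extD b x v = - iota ξb (Omega (n + 1) k) x v) :
    (∀ (x : Mfd (n + 1) k) (v : Fin (n + 1) → Mfd (n + 1) k),
      extD (iota ξb (iota ξa (Omega (n + 1) k))) x v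
        = - iota (lieB ξa ξb) (Omega (n + 1) k) x v)
    ∧
    (∃ ξ : Mfd (n + 1) k → Mfd (n + 1) k,
      ∀ (x : Mfd (n + 1) k) (v : Fin (n + 1) → Mfd (n + 1) k),
        extD (iota ξb (iota ξa (Omega (n + 1) k))) x v
          = - iota ξ (Omega (n + 1) k) x v) := by
  have hOm : ∀ (x : Mfd (n + 1) k) (w : Fin (n + 2) → Mfd (n + 1) k),
      Omega (n + 1) k x w = Om (n + 1) k w := fun x w => Omega_eq x w
  have hdξa : ∀ x, HasFDerivAt ξa (fderiv ℝ ξa x) x :=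
    fun x => (hξa.differentiable (by simp) x).hasFDerivAt
  have hdξb : ∀ x, HasFDerivAt ξb (fderiv ℝ ξb x) x :=
    fun x => (hξb.differentiable (by simp) x).hasFDerivAt
  -- derivative of a single contraction of `Om` along a vector field
  have hF1 : ∀ ξ : Mfd (n + 1) k → Mfd (n + 1) k, (∀ x, HasFDerivAt ξ (fderiv ℝ ξ x) x) →
      ∀ (x : Mfd (n + 1) k) (u : Fin (n + 1) → Mfd (n + 1) k),
      fderiv ℝ (fun y => Om (n + 1) k (Fin.cons (ξ y) u)) x
        = (OmCLM0 u).comp (fderiv ℝ ξ x) := by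
    intro ξ hξ x u
    have heq : (fun y => Om (n + 1) k (Fin.cons (ξ y) u)) = fun y => OmCLM0 u (ξ y) := by
      funext y; rw [OmCLM0_apply]
    rw [heq]
    exact (((OmCLM0 u).hasFDerivAt).comp x (hξ x)).fderiv
  -- `d (ι_ξ Ω) = 0` for the vector fields coming from the hypotheses
  have hgen : ∀ c : Form (n + 1) k n, SmoothF c → ∀ ξ : Mfd (n + 1) k → Mfd (n + 1) k,
      ContDiff ℝ (⊤ : ℕ∞) ξ →
      (∀ x v, extD c x v = - iota ξ (Omega (n + 1) k) x v) →
      ∀ (x : Mfd (n + 1) k) (w : Fin (n + 2) → Mfd (n + 1) k),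
        ∑ j : Fin (n + 2), (-1 : ℝ) ^ (j : ℕ) *
          Om (n + 1) k (Fin.cons (fderiv ℝ ξ x (w j)) (j.removeNth w)) = 0 := by
    intro c hc ξ hξ hdc x w
    have h0 : extD (extD c) x w = 0 := extD_extD c hc x w
    have hce : extD c = fun y u => -(Om (n + 1) k (Fin.cons (ξ y) u)) := by
      funext y u
      rw [hdc y u]
      show -(Omega (n + 1) k y (Fin.cons (ξ y) u)) = _
      rw [hOm]
    rw [hce] at h0
    have hfun : ∀ j : Fin (n + 2),
        fderiv ℝ (fun y => -(Om (n + 1) k (Fin.cons (ξ y) (j.removeNth w)))) x (w j)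
          = -(Om (n + 1) k (Fin.cons (fderiv ℝ ξ x (w j)) (j.removeNth w))) := by
      intro j
      rw [fderiv_fun_neg, ContinuousLinearMap.neg_apply,
        hF1 ξ (fun x => (hξ.differentiable (by simp) x).hasFDerivAt) x,
        ContinuousLinearMap.comp_apply, OmCLM0_apply]
    have h1 : ∑ j : Fin (n + 2), (-1 : ℝ) ^ (j : ℕ) *
        -(Om (n + 1) k (Fin.cons (fderiv ℝ ξ x (w j)) (j.removeNth w))) = 0 := by
      have h2 : (∑ j : Fin (n + 2), (-1 : ℝ) ^ (j : ℕ) *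
          -(Om (n + 1) k (Fin.cons (fderiv ℝ ξ x (w j)) (j.removeNth w))))
          = extD (fun y u => -(Om (n + 1) k (Fin.cons (ξ y) u))) x w := by
        show _ = ∑ j : Fin (n + 2), (-1 : ℝ) ^ (j : ℕ) *
          fderiv ℝ (fun y => -(Om (n + 1) k (Fin.cons (ξ y) (j.removeNth w)))) x (w j)
        exact Finset.sum_congr rfl fun j _ => by rw [hfun j]
      rw [h2, h0]
    calc ∑ j : Fin (n + 2), (-1 : ℝ) ^ (j : ℕ) *
          Om (n + 1) k (Fin.cons (fderiv ℝ ξ x (w j)) (j.removeNth w))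
        = - ∑ j : Fin (n + 2), (-1 : ℝ) ^ (j : ℕ) *
            -(Om (n + 1) k (Fin.cons (fderiv ℝ ξ x (w j)) (j.removeNth w))) := by
          rw [← Finset.sum_neg_distrib]
          exact Finset.sum_congr rfl fun j _ => by ring
      _ = 0 := by rw [h1, neg_zero]
  -- derivative of the double contraction
  have hD2 : ∀ (x : Mfd (n + 1) k) (u : Fin n → Mfd (n + 1) k) (h : Mfd (n + 1) k),
      fderiv ℝ (fun y => Om (n + 1) k (Fin.cons (ξa y) (Fin.cons (ξb y) u))) x h
        = Om (n + 1) k (Fin.cons (fderiv ℝ ξa x h) (Fin.cons (ξb x) u))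
          + Om (n + 1) k (Fin.cons (ξa x) (Fin.cons (fderiv ℝ ξb x h) u)) := by
    intro x u h
    have hc : HasFDerivAt (fun y => OmCLM2 u (ξa y))
        ((OmCLM2 u).comp (fderiv ℝ ξa x)) x := ((OmCLM2 u).hasFDerivAt).comp x (hdξa x)
    have hfd := hc.clm_apply (hdξb x)
    have hfe : (fun y => (OmCLM2 u (ξa y)) (ξb y))
        = fun y => Om (n + 1) k (Fin.cons (ξa y) (Fin.cons (ξb y) u)) := rfl
    rw [← hfe, hfd.fderiv]
    simp only [ContinuousLinearMap.add_apply, ContinuousLinearMap.coe_comp',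
      Function.comp_apply, ContinuousLinearMap.flip_apply, ContinuousLinearMap.comp_apply,
      OmCLM2_apply]
    ring
  -- the main identity
  have main : ∀ (x : Mfd (n + 1) k) (v : Fin (n + 1) → Mfd (n + 1) k),
      extD (iota ξb (iota ξa (Omega (n + 1) k))) x v
        = - iota (lieB ξa ξb) (Omega (n + 1) k) x v := by
    intro x v
    have hA2 : Om (n + 1) k (Fin.cons (fderiv ℝ ξa x (ξb x)) v)
        - ∑ i : Fin (n + 1), (-1 : ℝ) ^ (i : ℕ) *
            Om (n + 1) k (Fin.cons (fderiv ℝ ξa x (v i)) (Fin.cons (ξb x) (i.removeNth v))) = 0 :=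
      (hgen_cons (fun z => fderiv ℝ ξa x z) (ξb x) v).symm.trans
        (hgen a ha ξa hξa hda x (Fin.cons (ξb x) v))
    have hB2 : Om (n + 1) k (Fin.cons (fderiv ℝ ξb x (ξa x)) v)
        - ∑ i : Fin (n + 1), (-1 : ℝ) ^ (i : ℕ) *
            Om (n + 1) k (Fin.cons (fderiv ℝ ξb x (v i)) (Fin.cons (ξa x) (i.removeNth v))) = 0 :=
      (hgen_cons (fun z => fderiv ℝ ξb x z) (ξa x) v).symm.trans
        (hgen b hb ξb hξb hdb x (Fin.cons (ξa x) v))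
    have hA3 := sub_eq_zero.mp hA2
    have hB3 := sub_eq_zero.mp hB2
    have hstep : extD (iota ξb (iota ξa (Omega (n + 1) k))) x v
        = ∑ i : Fin (n + 1), (-1 : ℝ) ^ (i : ℕ) *
            (Om (n + 1) k (Fin.cons (fderiv ℝ ξa x (v i)) (Fin.cons (ξb x) (i.removeNth v)))
             + Om (n + 1) k (Fin.cons (ξa x) (Fin.cons (fderiv ℝ ξb x (v i)) (i.removeNth v)))) := by
      show (∑ i : Fin (n + 1), (-1 : ℝ) ^ (i : ℕ) * fderiv ℝ
          (fun y => iota ξb (iota ξa (Omega (n + 1) k)) y (i.removeNth v)) x (v i)) = _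
      refine Finset.sum_congr rfl fun i _ => ?_
      congr 1
      have heq : (fun y => iota ξb (iota ξa (Omega (n + 1) k)) y (i.removeNth v))
          = fun y => Om (n + 1) k (Fin.cons (ξa y) (Fin.cons (ξb y) (i.removeNth v))) := by
        funext y; exact hOm y _
      rw [heq, hD2]
    have hrhs : - iota (lieB ξa ξb) (Omega (n + 1) k) x v
        = Om (n + 1) k (Fin.cons (fderiv ℝ ξa x (ξb x)) v)
          - Om (n + 1) k (Fin.cons (fderiv ℝ ξb x (ξa x)) v) := by
      show -(Omega (n + 1) k x (Fin.cons (lieB ξa ξb x) v)) = _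
      rw [hOm]
      show -(Om (n + 1) k (Fin.cons
        (fderiv ℝ ξb x (ξa x) - fderiv ℝ ξa x (ξb x)) v)) = _
      rw [show Om (n + 1) k (Fin.cons (fderiv ℝ ξb x (ξa x) - fderiv ℝ ξa x (ξb x)) v)
          = Om (n + 1) k (Fin.cons (fderiv ℝ ξb x (ξa x)) v)
            - Om (n + 1) k (Fin.cons (fderiv ℝ ξa x (ξb x)) v)
        from (OmCLM0 v).map_sub (fderiv ℝ ξb x (ξa x)) (fderiv ℝ ξa x (ξb x)), neg_sub]
    have hsplit : ∀ i : Fin (n + 1),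
        (-1 : ℝ) ^ (i : ℕ) *
          (Om (n + 1) k (Fin.cons (fderiv ℝ ξa x (v i)) (Fin.cons (ξb x) (i.removeNth v)))
           + Om (n + 1) k (Fin.cons (ξa x) (Fin.cons (fderiv ℝ ξb x (v i)) (i.removeNth v))))
        = (-1 : ℝ) ^ (i : ℕ) *
            Om (n + 1) k (Fin.cons (fderiv ℝ ξa x (v i)) (Fin.cons (ξb x) (i.removeNth v)))
          - (-1 : ℝ) ^ (i : ℕ) *
            Om (n + 1) k (Fin.cons (fderiv ℝ ξb x (v i)) (Fin.cons (ξa x) (i.removeNth v))) := by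
      intro i
      rw [Om_swap01 (ξa x) (fderiv ℝ ξb x (v i)) (i.removeNth v)]
      ring
    rw [hstep, hrhs, Finset.sum_congr rfl (fun i _ => hsplit i), Finset.sum_sub_distrib,
      ← hA3, ← hB3]
  exact ⟨main, ⟨lieB ξa ξb, main⟩⟩


end Pataplectic

end
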